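/- arXiv:2605.09475 — 2 statements merged into one kernel-verified Lean document; each statement's English description precedes it below -/
import Mathlib

section
/- Let (G, H) be an encoded Hamiltonian cubic 3-pole with distinguished degree-2 vertices v₁, v₂, v₃. If all three segments of H determined by v₁, v₂, v₃ have odd length, then (G, H) has a proper 4-cover. -/
open SimpleGraph

variable {V : Type*}

/-- Encoded Hamiltonian cubic 3-pole: `H` is a Hamiltonian cycle of `G`
(a connected spanning 2-regular subgraph), the three distinguished vertices
`v₁, v₂, v₃` are pairwise distinct and have degree 2 in `G`, and every other
vertex has degree 3 in `G`. -/
def IsHam3Pole (G H : SimpleGraph V) (v₁ v₂ v₃ : V) : Prop :=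
  H ≤ G ∧ H.Connected ∧ (∀ v : V, (H.neighborSet v).ncard = 2) ∧
  v₁ ≠ v₂ ∧ v₁ ≠ v₃ ∧ v₂ ≠ v₃ ∧
  (G.neighborSet v₁).ncard = 2 ∧ (G.neighborSet v₂).ncard = 2 ∧
  (G.neighborSet v₃).ncard = 2 ∧
  ∀ v : V, v ≠ v₁ → v ≠ v₂ → v ≠ v₃ → (G.neighborSet v).ncard = 3

/-- A proper 4-cover of the 3-pole `(G, H)`: three matchings `M₁, M₂, M₃` of `G`
such that `Mᵢ` saturates exactly the vertices other than `vᵢ`, and together with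
the chord set `Q = E(G) \ E(H)` they cover all edges of `G`. -/
def Proper4Cover (G H : SimpleGraph V) (v₁ v₂ v₃ : V) : Prop :=
  ∃ M₁ M₂ M₃ : G.Subgraph,
    M₁.IsMatching ∧ M₂.IsMatching ∧ M₃.IsMatching ∧
    M₁.verts = ({v₁}ᶜ : Set V) ∧ M₂.verts = ({v₂}ᶜ : Set V) ∧
    M₃.verts = ({v₃}ᶜ : Set V) ∧
    M₁.edgeSet ∪ M₂.edgeSet ∪ M₃.edgeSet ∪ (G.edgeSet \ H.edgeSet) = G.edgeSet

/-- A segment of `(G, H)`: a path along `H` whose endpoints are two distinct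
vertices among `v₁, v₂, v₃` and which contains no other vertex among them. -/
def IsSegment (G H : SimpleGraph V) (v₁ v₂ v₃ : V) {x y : V} (p : G.Walk x y) : Prop :=
  x ∈ ({v₁, v₂, v₃} : Set V) ∧ y ∈ ({v₁, v₂, v₃} : Set V) ∧ x ≠ y ∧
  p.IsPath ∧ (∀ e ∈ p.edges, e ∈ H.edgeSet) ∧
  ∀ w ∈ ({v₁, v₂, v₃} : Set V), w ∈ p.support → w = x ∨ w = y

/-- An exterior chord for a segment `p` from `x` to `y`: a chord of `(G, H)` having
exactly one endvertex on `p`, this endvertex being an internal vertex of `p`. -/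
def IsExteriorChord (G H : SimpleGraph V) {x y : V} (p : G.Walk x y) (e : Sym2 V) : Prop :=
  e ∈ G.edgeSet \ H.edgeSet ∧
  ∃ u w : V, e = s(u, w) ∧ u ∈ p.support ∧ w ∉ p.support ∧ u ≠ x ∧ u ≠ y

/-- An alternating circuit of `(G, H)`: a nonempty connected 2-regular subgraph `C`
of `G` such that at every vertex of `C` exactly one of the two incident edges of `C`
lies in `H` (hence the other is a chord): the edges alternate between `H` and chords. -/
def IsAlternatingCircuit (G H : SimpleGraph V) (C : G.Subgraph) : Prop :=
  C.verts.Nonempty ∧ C.Connected ∧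
  (∀ v ∈ C.verts, (C.neighborSet v).ncard = 2) ∧
  (∀ v ∈ C.verts, (C.neighborSet v ∩ H.neighborSet v).ncard = 1)

/-- There is a path of `H` from `u` to `w` all of whose internal vertices lie in
the vertex set of `C`. -/
def BridgePath (G H : SimpleGraph V) (C : G.Subgraph) (u w : V) : Prop :=
  ∃ p : G.Walk u w, p.IsPath ∧ (∀ e ∈ p.edges, e ∈ H.edgeSet) ∧
    ∀ x ∈ p.support, x ≠ u → x ≠ w → x ∈ C.verts

/-!
The Hamiltonian cycle `H` can be indexed periodically as `c : ZMod m → V` with `c 0 = v₁`,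
`v₂ = c a`, `v₃ = c b`, `0 < a < b < m`. The three segments have lengths `a`, `b - a`, `m - b`,
so all three are odd; hence `m` is odd and `b` is even. Deleting one vertex `c p` from an odd
cycle leaves a path on an even number of vertices, whose perfect matching consists of the edges
`c k c (k+1)` with `k - p` odd (mod `m`). Taking `p = 0, a, b` gives `M₁, M₂, M₃`, and every
edge `c k c (k+1)` of `H` lies in one of them: in `M₁` if `k` is odd, in `M₂` if `k ≥ a` is
even, and in `M₃` if `k < a` is even, since then `k - b + m` is odd. The chords are in `Q`.
-/

namespace ZMod

variable {m : ℕ} [NeZero m]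

theorem val_add_one_of_odd (hm : Odd m) {i : ZMod m} (hi : Odd i.val) :
    (i + 1).val = i.val + 1 := by
  have hlt : i.val + 1 < m := by
    have := i.val_lt
    obtain ⟨k, hk⟩ := hm
    obtain ⟨l, hl⟩ := hi
    omega
  rw [← val_cast_of_lt hlt, Nat.cast_succ, natCast_zmod_val]

theorem val_sub_one_of_ne_zero {i : ZMod m} (hi : i ≠ 0) : (i - 1).val = i.val - 1 := by
  have hpos := val_pos.mpr hi
  rw [← val_cast_of_lt (n := m) (a := i.val - 1) (by have := i.val_lt; omega),
    Nat.cast_sub hpos, Nat.cast_one, natCast_zmod_val]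

theorem val_sub_natCast_of_lt {i : ZMod m} {b : ℕ} (hib : i.val < b) (hbm : b ≤ m) :
    (i - b).val = i.val + (m - b) := by
  rw [← val_cast_of_lt (n := m) (a := i.val + (m - b)) (by omega), Nat.cast_add,
    Nat.cast_sub hbm, natCast_self, natCast_zmod_val, zero_sub, sub_eq_add_neg]

end ZMod

theorem odd_and_odd_val_or_odd_val_sub {m a b : ℕ} [NeZero m] (hab : a < b) (hbm : b < m)
    (ha : Odd a) (hba : Odd (b - a)) (hmb : Odd (m - b)) :
    Odd m ∧ ∀ i : ZMod m, Odd i.val ∨ Odd (i - a).val ∨ Odd (i - b).val := by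
  rw [Nat.odd_iff] at ha hba hmb
  refine ⟨by rw [Nat.odd_iff]; omega, fun i => ?_⟩
  rcases Nat.even_or_odd i.val with hi | hi
  · rw [Nat.even_iff] at hi
    rcases lt_or_ge i.val a with hia | hai
    · right; right
      rw [ZMod.val_sub_natCast_of_lt (by omega) hbm.le, Nat.odd_iff]
      omega
    · right; left
      rw [ZMod.val_sub (by rwa [ZMod.val_cast_of_lt (by omega)]),
        ZMod.val_cast_of_lt (by omega), Nat.odd_iff]
      omega
  · exact Or.inl hi

theorem exists_odd_val_and_sym2_eq_iff {m : ℕ} {f : ZMod m → V} (hf : f.Injective)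
    (q : ZMod m) (w : V) : (∃ i : ZMod m, Odd i.val ∧ s(f i, f (i + 1)) = s(f q, w)) ↔
      Odd q.val ∧ w = f (q + 1) ∨ Odd (q - 1).val ∧ w = f (q - 1) := by
  refine ⟨?_, ?_⟩
  · rintro ⟨i, hi, he⟩
    rcases Sym2.eq_iff.mp he with ⟨hiq, rfl⟩ | ⟨rfl, hiq⟩
    · obtain rfl := hf hiq
      exact Or.inl ⟨hi, rfl⟩
    · obtain rfl := eq_sub_of_add_eq (hf hiq)
      exact Or.inr ⟨hi, rfl⟩
  · rintro (⟨hq, rfl⟩ | ⟨hq, rfl⟩)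
    · exact ⟨q, hq, rfl⟩
    · exact ⟨q - 1, hq, by rw [sub_add_cancel, Sym2.eq_swap]⟩

namespace SimpleGraph

variable {G H : SimpleGraph V}

theorem exists_isMatching_verts_eq_compl_zero {m : ℕ} [NeZero m] (hm : Odd m)
    {f : ZMod m → V} (hf : f.Bijective) (hadj : ∀ i, G.Adj (f i) (f (i + 1))) :
    ∃ M : G.Subgraph, M.IsMatching ∧ M.verts = {f 0}ᶜ ∧
      ∀ i, Odd i.val → s(f i, f (i + 1)) ∈ M.edgeSet := by
  have hne : ∀ i : ZMod m, Odd i.val → i ≠ 0 ∧ i + 1 ≠ 0 := fun i hi =>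
    ⟨by rintro rfl; simp at hi, fun h => by simpa [h] using ZMod.val_add_one_of_odd hm hi⟩
  have hadjM := exists_odd_val_and_sym2_eq_iff hf.1
  refine ⟨{ verts := {f 0}ᶜ
            Adj := fun x y => ∃ i, Odd i.val ∧ s(f i, f (i + 1)) = s(x, y)
            adj_sub := ?_, edge_vert := ?_, symm := ?_ }, ?_, rfl, fun i hi => ⟨i, hi, rfl⟩⟩
  · rintro x y ⟨i, -, he⟩
    rw [← G.mem_edgeSet, ← he]
    exact hadj i
  · rintro x y ⟨i, hi, he⟩ hx
    rcases Sym2.eq_iff.mp he with ⟨rfl, -⟩ | ⟨-, rfl⟩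
    · exact (hne i hi).1 (hf.1 hx)
    · exact (hne i hi).2 (hf.1 hx)
  · exact ⟨fun x y ⟨i, hi, he⟩ => ⟨i, hi, he.trans Sym2.eq_swap⟩⟩
  · intro v hv
    obtain ⟨q, rfl⟩ := hf.2 v
    have hq : q ≠ 0 := fun h => hv (congrArg f h)
    have hpar : Odd (q - 1).val ↔ ¬Odd q.val := by
      rw [ZMod.val_sub_one_of_ne_zero hq, Nat.not_odd_iff_even]
      have := ZMod.val_pos.mpr hq
      simp only [Nat.odd_iff, Nat.even_iff]
      omega
    by_cases ho : Odd q.val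
    · refine ⟨f (q + 1), (hadjM q _).mpr (Or.inl ⟨ho, rfl⟩), fun w hw => ?_⟩
      rcases (hadjM q w).mp hw with ⟨-, rfl⟩ | ⟨h, -⟩
      · rfl
      · exact absurd ho (hpar.mp h)
    · refine ⟨f (q - 1), (hadjM q _).mpr (Or.inr ⟨hpar.mpr ho, rfl⟩), fun w hw => ?_⟩
      rcases (hadjM q w).mp hw with ⟨h, -⟩ | ⟨-, rfl⟩
      · exact absurd h ho
      · rfl

theorem exists_isMatching_verts_eq_compl {m : ℕ} [NeZero m] (hm : Odd m)
    {f : ZMod m → V} (hf : f.Bijective) (hadj : ∀ i, G.Adj (f i) (f (i + 1))) (p : ZMod m) :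
    ∃ M : G.Subgraph, M.IsMatching ∧ M.verts = {f p}ᶜ ∧
      ∀ i, Odd (i - p).val → s(f i, f (i + 1)) ∈ M.edgeSet := by
  obtain ⟨M, hM, hverts, hedges⟩ := exists_isMatching_verts_eq_compl_zero hm
    (hf.comp (Equiv.addRight p).bijective) (f := fun i => f (i + p))
    (fun i => by simpa only [add_right_comm] using hadj (i + p))
  refine ⟨M, hM, by simpa using hverts, fun i hi => ?_⟩
  simpa only [sub_add_cancel, sub_add_eq_add_sub] using hedges (i - p) hi

theorem union_union_union_sdiff_eq_edgeSet {M₁ M₂ M₃ : G.Subgraph}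
    (hH : H.edgeSet ⊆ M₁.edgeSet ∪ M₂.edgeSet ∪ M₃.edgeSet) :
    M₁.edgeSet ∪ M₂.edgeSet ∪ M₃.edgeSet ∪ (G.edgeSet \ H.edgeSet) = G.edgeSet := by
  refine subset_antisymm (Set.union_subset (Set.union_subset (Set.union_subset
    M₁.edgeSet_subset M₂.edgeSet_subset) M₃.edgeSet_subset) Set.sdiff_subset) fun e he => ?_
  by_cases heH : e ∈ H.edgeSet
  · exact Or.inl (hH heH)
  · exact Or.inr ⟨he, heH⟩

theorem exists_isCycle_forall_mem_support [Finite V] (hconn : H.Connected)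
    (hreg : ∀ v, (H.neighborSet v).ncard = 2) (u : V) :
    ∃ c : H.Walk u u, c.IsCycle ∧ ∀ v, v ∈ c.support := by
  have hcyc : H.IsCycles := fun v _ => hreg v
  obtain ⟨c, hc, hverts⟩ := hcyc.exists_cycle_toSubgraph_verts_eq_connectedComponentSupp
    (c := H.connectedComponentMk u) rfl (Set.nonempty_of_ncard_ne_zero (by simp [hreg]))
  refine ⟨c, hc, fun v => ?_⟩
  rw [← Walk.mem_verts_toSubgraph, hverts, ConnectedComponent.mem_supp_iff,
    ConnectedComponent.eq]
  exact hconn.preconnected v u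

namespace Walk

variable {u v₁ v₂ v₃ : V}

def getCycleVert (c : G.Walk u u) (i : ZMod c.length) : V := c.getVert i.val

@[simp]
theorem getCycleVert_zero (c : G.Walk u u) : c.getCycleVert 0 = u := by
  rw [getCycleVert, ZMod.val_zero, getVert_zero]

theorem getCycleVert_natCast (c : G.Walk u u) {k : ℕ} (hk : k ≤ c.length) :
    c.getCycleVert k = c.getVert k := by
  rcases hk.lt_or_eq with hk | rfl
  · rw [getCycleVert, ZMod.val_cast_of_lt hk]
  · rw [getCycleVert, ZMod.natCast_self, ZMod.val_zero, getVert_zero, getVert_length]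

theorem IsCycle.neZero_length {c : G.Walk u u} (hc : c.IsCycle) : NeZero c.length :=
  ⟨by have := hc.three_le_length; omega⟩

theorem IsCycle.eq_or_ends_of_getVert_eq {c : G.Walk u u} (hc : c.IsCycle) {i j : ℕ}
    (hi : i ≤ c.length) (hj : j ≤ c.length) (h : c.getVert i = c.getVert j) :
    i = j ∨ i = 0 ∧ j = c.length ∨ i = c.length ∧ j = 0 := by
  rcases hi.lt_or_eq with hi | rfl
  · rcases hj.lt_or_eq with hj | rfl
    · exact Or.inl (hc.getVert_injOn' (by simp only [Set.mem_ofPred_eq]; omega)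
      (by simp only [Set.mem_ofPred_eq]; omega) h)
    · rw [getVert_length, hc.getVert_endpoint_iff hi.le] at h
      omega
  · rw [getVert_length, eq_comm, hc.getVert_endpoint_iff hj] at h
    omega

theorem IsCycle.adj_getCycleVert_add_one {c : G.Walk u u} (hc : c.IsCycle) (i : ZMod c.length) :
    G.Adj (c.getCycleVert i) (c.getCycleVert (i + 1)) := by
  have := hc.neZero_length
  have hi := i.val_lt
  rw [← ZMod.natCast_zmod_val i, ← Nat.cast_succ, getCycleVert_natCast _ hi.le,
    getCycleVert_natCast _ hi]
  exact c.adj_getVert_succ hi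

theorem IsCycle.bijective_getCycleVert {c : G.Walk u u} (hc : c.IsCycle)
    (hspan : ∀ v, v ∈ c.support) : c.getCycleVert.Bijective := by
  have := hc.neZero_length
  refine ⟨fun i j h => ZMod.val_injective _ ?_, fun v => ?_⟩
  · have := hc.eq_or_ends_of_getVert_eq i.val_lt.le j.val_lt.le h
    have := i.val_lt
    have := j.val_lt
    omega
  · obtain ⟨n, rfl, hn⟩ := mem_support_iff_exists_getVert.mp (hspan v)
    exact ⟨n, getCycleVert_natCast c hn⟩

theorem IsCycle.exists_getCycleVert_eq_of_mem_edgeSet [Finite V]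
    (hreg : ∀ v, (H.neighborSet v).ncard = 2) {c : H.Walk u u} (hc : c.IsCycle)
    (hspan : ∀ v, v ∈ c.support) {e : Sym2 V} (he : e ∈ H.edgeSet) :
    ∃ i, s(c.getCycleVert i, c.getCycleVert (i + 1)) = e := by
  classical
  have := Fintype.ofFinite V
  induction e using Sym2.ind with | h x y => ?_
  obtain ⟨k, hk, hlt⟩ := c.toSubgraph_adj_iff.mp
    ((hc.adj_toSubgraph_iff_of_isCycles (fun v _ => hreg v)
      (c.mem_verts_toSubgraph.mpr (hspan x)) y).mpr he)
  refine ⟨k, ?_⟩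
  rwa [← Nat.cast_succ, getCycleVert_natCast _ hlt.le, getCycleVert_natCast _ hlt]

theorem IsCycle.odd_sub_of_consecutive_poles (hHG : H ≤ G)
    (hodd : ∀ (x y : V) (p : G.Walk x y), IsSegment G H v₁ v₂ v₃ p → Odd p.length)
    {c : H.Walk u u} (hc : c.IsCycle) {s t : ℕ} (hst : s < t) (htm : t ≤ c.length)
    (hts : t - s < c.length) (hsP : c.getVert s ∈ ({v₁, v₂, v₃} : Set V))
    (htP : c.getVert t ∈ ({v₁, v₂, v₃} : Set V))
    (hbetween : ∀ k, s < k → k < t → c.getVert k ∉ ({v₁, v₂, v₃} : Set V)) :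
    Odd (t - s) := by
  set q := (c.drop s).take (t - s)
  have hlen : q.length = t - s := by simp only [q, take_length, drop_length]; omega
  have hget : ∀ k ≤ t - s, q.getVert k = c.getVert (s + k) := fun k hk => by
    simp only [q, take_getVert, drop_getVert, min_eq_right hk]
  have hinj : ∀ k ≤ t - s, ∀ k' ≤ t - s, c.getVert (s + k) = c.getVert (s + k') → k = k' :=
    fun k hk k' hk' h => by have := hc.eq_or_ends_of_getVert_eq (by omega) (by omega) h; omega
  have hend : (c.drop s).getVert (t - s) = c.getVert t := by
    rw [drop_getVert, Nat.add_sub_cancel' hst.le]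
  have hseg : IsSegment G H v₁ v₂ v₃ (q.mapLe hHG) := by
    refine ⟨hsP, hend ▸ htP, fun h => ?_, (isPath_mapLe hHG).mpr ?_, fun e he => ?_, ?_⟩
    · have := hinj 0 (Nat.zero_le _) (t - s) le_rfl (by rwa [add_zero, ← drop_getVert])
      omega
    · refine (IsPath.getVert_injOn_iff q).mp fun k hk k' hk' h => ?_
      simp only [Set.mem_ofPred_eq, hlen] at hk hk'
      rw [hget k hk, hget k' hk'] at h
      exact hinj k hk k' hk' h
    · rw [edges_mapLe_eq_edges] at he
      exact q.edges_subset_edgeSet he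
    · intro w hw hws
      rw [support_mapLe_eq_support, mem_support_iff_exists_getVert, hlen] at hws
      obtain ⟨k, rfl, hk⟩ := hws
      rw [hget k hk] at hw ⊢
      rcases Nat.eq_zero_or_pos k with rfl | hk0
      · exact Or.inl rfl
      · rcases hk.lt_or_eq with hkt | rfl
        · exact absurd hw (hbetween (s + k) (by omega) (by omega))
        · exact Or.inr (by rw [← drop_getVert])
  simpa [hlen] using hodd _ _ _ hseg

theorem IsCycle.odd_of_three_poles (hHG : H ≤ G)
    (hodd : ∀ (x y : V) (p : G.Walk x y), IsSegment G H v₁ v₂ v₃ p → Odd p.length)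
    {c : H.Walk u u} (hc : c.IsCycle) (hu : u ∈ ({v₁, v₂, v₃} : Set V)) {a b : ℕ}
    (ha0 : 0 < a) (hab : a < b) (hbm : b < c.length)
    (ha : c.getVert a ∈ ({v₁, v₂, v₃} : Set V)) (hb : c.getVert b ∈ ({v₁, v₂, v₃} : Set V))
    (hpole : ∀ k ≤ c.length, c.getVert k ∈ ({v₁, v₂, v₃} : Set V) →
      k = 0 ∨ k = a ∨ k = b ∨ k = c.length) :
    Odd a ∧ Odd (b - a) ∧ Odd (c.length - b) := by
  have hbetween : ∀ s t, t ≤ c.length → (∀ k, s < k → k < t → k ≠ a ∧ k ≠ b ∧ k ≠ 0) →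
      ∀ k, s < k → k < t → c.getVert k ∉ ({v₁, v₂, v₃} : Set V) :=
    fun s t ht hne k hsk hkt hk => by have := hpole k (by omega) hk; have := hne k hsk hkt; omega
  refine ⟨?_, ?_, ?_⟩
  · simpa using hc.odd_sub_of_consecutive_poles hHG hodd ha0 (by omega) (by omega)
      (by rwa [getVert_zero]) ha (hbetween 0 a (by omega) fun k _ _ => by omega)
  · exact hc.odd_sub_of_consecutive_poles hHG hodd hab hbm.le (by omega) ha hb
      (hbetween a b hbm.le fun k _ _ => by omega)
  · exact hc.odd_sub_of_consecutive_poles hHG hodd hbm le_rfl (by omega) hb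
      (by rwa [getVert_length]) (hbetween b c.length le_rfl fun k _ _ => by omega)

theorem IsCycle.odd_length_and_forall_odd_val (hHG : H ≤ G)
    (hodd : ∀ (x y : V) (p : G.Walk x y), IsSegment G H v₁ v₂ v₃ p → Odd p.length)
    {c : H.Walk v₁ v₁} (hc : c.IsCycle) (h12 : v₁ ≠ v₂) (h13 : v₁ ≠ v₃) (h23 : v₂ ≠ v₃)
    {p₂ p₃ : ZMod c.length} (h₂ : c.getCycleVert p₂ = v₂) (h₃ : c.getCycleVert p₃ = v₃) :
    Odd c.length ∧ ∀ i, Odd i.val ∨ Odd (i - p₂).val ∨ Odd (i - p₃).val := by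
  have := hc.neZero_length
  have hp₂m := p₂.val_lt
  have hp₃m := p₃.val_lt
  have hpole : ∀ k ≤ c.length, c.getVert k ∈ ({v₁, v₂, v₃} : Set V) →
      k = 0 ∨ k = p₂.val ∨ k = p₃.val ∨ k = c.length := by
    intro k hk hkP
    rcases hkP with h | h | h
    · have := hc.eq_or_ends_of_getVert_eq hk (Nat.zero_le _) (h.trans c.getVert_zero.symm)
      omega
    · have := hc.eq_or_ends_of_getVert_eq hk hp₂m.le (h.trans h₂.symm)
      omega
    · have := hc.eq_or_ends_of_getVert_eq hk hp₃m.le (h.trans h₃.symm)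
      omega
  have hp₂0 : 0 < p₂.val :=
    Nat.pos_of_ne_zero fun h => h12 (by rw [← h₂, getCycleVert, h, getVert_zero])
  have hp₃0 : 0 < p₃.val :=
    Nat.pos_of_ne_zero fun h => h13 (by rw [← h₃, getCycleVert, h, getVert_zero])
  have hp₂₃ : p₂.val ≠ p₃.val := fun h => h23 (by rw [← h₂, ← h₃, getCycleVert, getCycleVert, h])
  have h₂P : c.getVert p₂.val ∈ ({v₁, v₂, v₃} : Set V) := Or.inr (Or.inl h₂)
  have h₃P : c.getVert p₃.val ∈ ({v₁, v₂, v₃} : Set V) := Or.inr (Or.inr h₃)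
  rcases lt_or_gt_of_ne hp₂₃ with hlt | hlt
  · obtain ⟨h1, h2, h3⟩ := hc.odd_of_three_poles hHG hodd (Or.inl rfl) hp₂0 hlt hp₃m h₂P h₃P hpole
    simpa only [ZMod.natCast_zmod_val] using odd_and_odd_val_or_odd_val_sub hlt hp₃m h1 h2 h3
  · obtain ⟨h1, h2, h3⟩ := hc.odd_of_three_poles hHG hodd (Or.inl rfl) hp₃0 hlt hp₂m h₃P h₂P
      fun k hk hkP => by have := hpole k hk hkP; omega
    obtain ⟨hm, hcover⟩ := odd_and_odd_val_or_odd_val_sub hlt hp₂m h1 h2 h3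
    simp only [ZMod.natCast_zmod_val] at hcover
    exact ⟨hm, fun i => (hcover i).imp_right Or.symm⟩

end Walk

end SimpleGraph

/-- If all three segments of `H` determined by `v₁, v₂, v₃` have odd length,
then `(G, H)` has a proper 4-cover. -/
theorem ham3pole_allOddSegments_proper4Cover [Finite V] (G H : SimpleGraph V)
    (v₁ v₂ v₃ : V) (h : IsHam3Pole G H v₁ v₂ v₃)
    (hodd : ∀ (x y : V) (p : G.Walk x y), IsSegment G H v₁ v₂ v₃ p → Odd p.length) :
    Proper4Cover G H v₁ v₂ v₃ := by
  obtain ⟨hHG, hconn, hreg, h12, h13, h23, -⟩ := h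
  obtain ⟨c, hc, hspan⟩ := exists_isCycle_forall_mem_support hconn hreg v₁
  have := hc.neZero_length
  have hf := hc.bijective_getCycleVert hspan
  have hadj i := hHG (hc.adj_getCycleVert_add_one i)
  obtain ⟨p₂, h₂⟩ := hf.2 v₂
  obtain ⟨p₃, h₃⟩ := hf.2 v₃
  obtain ⟨hm, hcover⟩ := hc.odd_length_and_forall_odd_val hHG hodd h12 h13 h23 h₂ h₃
  obtain ⟨M₁, hM₁, hV₁, hE₁⟩ := exists_isMatching_verts_eq_compl hm hf hadj 0
  obtain ⟨M₂, hM₂, hV₂, hE₂⟩ := exists_isMatching_verts_eq_compl hm hf hadj p₂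
  obtain ⟨M₃, hM₃, hV₃, hE₃⟩ := exists_isMatching_verts_eq_compl hm hf hadj p₃
  refine ⟨M₁, M₂, M₃, hM₁, hM₂, hM₃, by rw [hV₁, Walk.getCycleVert_zero], by rw [hV₂, h₂],
    by rw [hV₃, h₃], union_union_union_sdiff_eq_edgeSet fun e he => ?_⟩
  obtain ⟨i, rfl⟩ := hc.exists_getCycleVert_eq_of_mem_edgeSet hreg hspan he
  rcases hcover i with h | h | h
  · exact Or.inl (Or.inl (hE₁ i (by rwa [sub_zero])))
  · exact Or.inl (Or.inr (hE₂ i h))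
  · exact Or.inr (hE₃ i h)
end

section
/- Let (G, H) be an encoded Hamiltonian cubic 3-pole with distinguished degree-2 vertices v₁, v₂, v₃, and let S be any segment of H determined by v₁, v₂, v₃. Then the number of exterior chords for S is congruent to |S| − 1 modulo 2. In particular, a segment of even length has an odd number of exterior chords, and a segment with exactly one exterior chord has even length. -/
/-!
Every internal vertex of a segment `S` has degree 3 in `G` and 2 in `H`, so it carries exactly
one chord, while the poles `v₁, v₂, v₃` carry none. Chords joining two internal vertices pair
those vertices up, so the `|S| - 1` internal vertices split into an even number of such vertices
and the endpoints of the exterior chords, one for each chord.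
-/

open SimpleGraph

variable {V : Type*}

namespace SimpleGraph

variable {Q : SimpleGraph V}

theorem even_card_of_forall_existsUnique_adj (s : Finset V)
    (h : ∀ v ∈ s, ∃! w, w ∈ s ∧ Q.Adj v w) : Even s.card := by
  have hM : ((⊤ : Q.Subgraph).induce (s : Set V)).IsMatching := by
    intro v hv
    obtain ⟨w, ⟨hws, hvw⟩, huniq⟩ := h v hv
    exact ⟨w, ⟨hv, hws, hvw⟩, fun u ⟨_, hus, hvu⟩ => huniq u ⟨hus, hvu⟩⟩
  let : Fintype ((⊤ : Q.Subgraph).induce (s : Set V)).verts := inferInstanceAs (Fintype s)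
  simpa using hM.even_card

theorem ncard_edges_leaving_modEq_card (I : Finset V) (hI : ∀ v ∈ I, ∃! w, Q.Adj v w) :
    {e ∈ Q.edgeSet | ∃ u ∈ I, ∃ w ∉ I, e = s(u, w)}.ncard ≡ I.card [MOD 2] := by
  classical
  choose! c hc hcu using hI
  set leaving := I.filter (c · ∉ I)
  set staying := I.filter (c · ∈ I)
  have hleaving : {e ∈ Q.edgeSet | ∃ u ∈ I, ∃ w ∉ I, e = s(u, w)} =
      leaving.image (fun v => s(v, c v)) := by
    ext e
    simp only [Set.mem_ofPred_eq, Finset.coe_image, Set.mem_image, Finset.coe_filter, leaving]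
    constructor
    · rintro ⟨he, u, hu, w, hw, rfl⟩
      obtain rfl := hcu u hu w he
      exact ⟨u, ⟨hu, hw⟩, rfl⟩
    · rintro ⟨v, ⟨hv, hcv⟩, rfl⟩
      exact ⟨hc v hv, v, hv, c v, hcv, rfl⟩
  have hinj : Set.InjOn (fun v => s(v, c v)) leaving := by
    intro a ha b hb hab
    simp only [Finset.coe_filter, Set.mem_ofPred_eq, leaving] at ha hb
    rcases Sym2.eq_iff.mp hab with ⟨hab, -⟩ | ⟨hab, -⟩
    · exact hab
    · exact absurd (hab ▸ ha.1) hb.2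
  have hstaying : Even staying.card := by
    refine even_card_of_forall_existsUnique_adj (Q := Q) staying fun v hv => ?_
    simp only [Finset.mem_filter, staying] at hv ⊢
    refine ⟨c v, ⟨⟨hv.2, ?_⟩, hc v hv.1⟩, fun w hw => hcu v hv.1 w hw.2⟩
    rw [← hcu (c v) hv.2 v (hc v hv.1).symm]
    exact hv.1
  rw [hleaving, Set.ncard_coe_finset, Finset.card_image_of_injOn hinj,
    ← Finset.card_filter_add_card_filter_not (s := I) (c · ∈ I)]
  change leaving.card ≡ staying.card + leaving.card [MOD 2]
  obtain ⟨k, hk⟩ := hstaying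
  rw [hk, Nat.ModEq]
  omega

theorem ncard_neighborSet_sdiff {G H : SimpleGraph V} (hHG : H ≤ G) {v : V}
    (hv : (H.neighborSet v).Finite) :
    ((G \ H).neighborSet v).ncard = (G.neighborSet v).ncard - (H.neighborSet v).ncard := by
  rw [neighborSet_sdiff, Set.ncard_sdiff (neighborSet_mono hHG v) hv]

namespace Walk

variable {G : SimpleGraph V} {x y : V}

def internalVertices [DecidableEq V] (p : G.Walk x y) : Finset V :=
  (p.support.toFinset.erase x).erase y

theorem mem_internalVertices [DecidableEq V] {p : G.Walk x y} {v : V} :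
    v ∈ p.internalVertices ↔ v ∈ p.support ∧ v ≠ x ∧ v ≠ y := by
  simp only [internalVertices, Finset.mem_erase, List.mem_toFinset]
  tauto

theorem IsPath.card_internalVertices [DecidableEq V] {p : G.Walk x y} (hp : p.IsPath) :
    p.internalVertices.card = p.length - 1 := by
  by_cases hxy : x = y
  · subst hxy
    simp [(isPath_iff_nil.mp hp).eq_nil, internalVertices]
  · have hx : x ∈ p.support.toFinset := by simp
    have hy : y ∈ p.support.toFinset.erase x := by simp [Ne.symm hxy]
    rw [internalVertices, Finset.card_erase_of_mem hy, Finset.card_erase_of_mem hx,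
      List.toFinset_card_of_nodup hp.support_nodup, length_support]
    omega

end Walk

end SimpleGraph

namespace IsHam3Pole

variable {G H : SimpleGraph V} {v₁ v₂ v₃ : V}

theorem finite_neighborSet (h : IsHam3Pole G H v₁ v₂ v₃) (v : V) : (H.neighborSet v).Finite :=
  Set.finite_of_ncard_ne_zero (by rw [h.2.2.1 v]; decide)

theorem not_sdiff_adj_of_mem (h : IsHam3Pole G H v₁ v₂ v₃) {z : V}
    (hz : z ∈ ({v₁, v₂, v₃} : Set V)) (w : V) : ¬ (G \ H).Adj z w := by
  have hfin := h.finite_neighborSet z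
  obtain ⟨hHG, -, hH, -, -, -, h₁, h₂, h₃, -⟩ := h
  have hG : (G.neighborSet z).ncard = 2 := by rcases hz with rfl | rfl | rfl <;> assumption
  have hchords : ((G \ H).neighborSet z).ncard = 0 := by
    rw [ncard_neighborSet_sdiff hHG hfin, hH, hG]
  have hfin' : ((G \ H).neighborSet z).Finite :=
    (Set.finite_of_ncard_ne_zero (by rw [hG]; decide)).subset (neighborSet_mono sdiff_le z)
  exact Set.eq_empty_iff_forall_notMem.mp ((Set.ncard_eq_zero hfin').mp hchords) w

theorem existsUnique_sdiff_adj (h : IsHam3Pole G H v₁ v₂ v₃) {v : V}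
    (hv : v ∉ ({v₁, v₂, v₃} : Set V)) : ∃! w, (G \ H).Adj v w := by
  have hfin := h.finite_neighborSet v
  obtain ⟨hHG, -, hH, -, -, -, -, -, -, hdeg⟩ := h
  simp only [Set.mem_insert_iff, Set.mem_singleton_iff, not_or] at hv
  have : ((G \ H).neighborSet v).ncard = 1 := by
    rw [ncard_neighborSet_sdiff hHG hfin, hH, hdeg v hv.1 hv.2.1 hv.2.2]
  obtain ⟨w, hw⟩ := Set.ncard_eq_one.mp this
  exact ⟨w, hw.ge rfl, fun u hu => hw.le hu⟩

end IsHam3Pole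

theorem setOf_isExteriorChord_eq [DecidableEq V] {G H : SimpleGraph V} {x y : V}
    {p : G.Walk x y} (hx : ∀ w, ¬ (G \ H).Adj x w) (hy : ∀ w, ¬ (G \ H).Adj y w) :
    {e | IsExteriorChord G H p e} =
      {e ∈ (G \ H).edgeSet |
        ∃ u ∈ p.internalVertices, ∃ w ∉ p.internalVertices, e = s(u, w)} := by
  ext e
  simp only [IsExteriorChord, ← edgeSet_sdiff, Walk.mem_internalVertices, Set.mem_ofPred_eq]
  constructor
  · rintro ⟨he, u, w, rfl, hu, hw, hux, huy⟩
    exact ⟨he, u, ⟨hu, hux, huy⟩, w, fun hw' => hw hw'.1, rfl⟩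
  · rintro ⟨he, u, ⟨hu, hux, huy⟩, w, hw, rfl⟩
    have hchord : (G \ H).Adj w u := (mem_edgeSet _).mp he |>.symm
    refine ⟨he, u, w, rfl, hu, fun hwp => hw ⟨hwp, ?_, ?_⟩, hux, huy⟩
    · rintro rfl
      exact hx u hchord
    · rintro rfl
      exact hy u hchord

theorem ham3pole_exteriorChord_parity_general (G H : SimpleGraph V)
    (v₁ v₂ v₃ : V) (h : IsHam3Pole G H v₁ v₂ v₃)
    (x y : V) (p : G.Walk x y) (hseg : IsSegment G H v₁ v₂ v₃ p) :
    {e : Sym2 V | IsExteriorChord G H p e}.ncard ≡ p.length - 1 [MOD 2] ∧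
    (Even p.length → Odd {e : Sym2 V | IsExteriorChord G H p e}.ncard) ∧
    ({e : Sym2 V | IsExteriorChord G H p e}.ncard = 1 → Even p.length) := by
  classical
  obtain ⟨hx, hy, hxy, hpath, -, hterm⟩ := hseg
  have hinternal : ∀ v ∈ p.internalVertices, ∃! w, (G \ H).Adj v w := by
    intro v hv
    obtain ⟨hvp, hvx, hvy⟩ := Walk.mem_internalVertices.mp hv
    exact h.existsUnique_sdiff_adj fun hv' => (hterm v hv' hvp).elim hvx hvy
  have hparity : {e : Sym2 V | IsExteriorChord G H p e}.ncard ≡ p.length - 1 [MOD 2] := by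
    rw [setOf_isExteriorChord_eq (h.not_sdiff_adj_of_mem hx) (h.not_sdiff_adj_of_mem hy),
      ← hpath.card_internalVertices]
    exact ncard_edges_leaving_modEq_card _ hinternal
  have hlen : p.length ≠ 0 := fun h0 => hxy (Walk.eq_of_length_eq_zero h0)
  rw [Nat.ModEq] at hparity
  refine ⟨hparity, fun heven => ?_, fun hone => ?_⟩
  · rw [Nat.even_iff] at heven
    rw [Nat.odd_iff]
    omega
  · rw [Nat.even_iff]
    omega

/-- For any segment `S` of an encoded Hamiltonian cubic 3-pole, the number of
exterior chords for `S` is congruent to `|S| - 1` modulo 2; in particular an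
even segment has an odd number of exterior chords, and a segment with exactly
one exterior chord has even length. -/
theorem ham3pole_exteriorChord_parity [Finite V] (G H : SimpleGraph V)
    (v₁ v₂ v₃ : V) (h : IsHam3Pole G H v₁ v₂ v₃)
    (x y : V) (p : G.Walk x y) (hseg : IsSegment G H v₁ v₂ v₃ p) :
    {e : Sym2 V | IsExteriorChord G H p e}.ncard ≡ p.length - 1 [MOD 2] ∧
    (Even p.length → Odd {e : Sym2 V | IsExteriorChord G H p e}.ncard) ∧
    ({e : Sym2 V | IsExteriorChord G H p e}.ncard = 1 → Even p.length) :=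
  ham3pole_exteriorChord_parity_general G H v₁ v₂ v₃ h x y p hseg
end
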